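/- Fix a site l ∈ S. Then the one-site conditional mixed-states density of p has the mixed form: for every x ∈ D, p(x) / ( ∫ p(x[l↦t]) dm_l(t) ) = ρ_l(x) · 1_{r_l}(x_l) + (1 − ρ_l(x)) · 1*_{r_l}(x_l) · q(x) / c_l(x); that is, the conditional law of the l-th coordinate given the others is a mixture placing mass ρ_l(x) at the point r_l and, with weight 1 − ρ_l(x), the absolutely continuous conditional density q(x)/c_l(x) of q. -/

import Mathlib

/-!
Fix the coordinates of `x` off the site `l` and look at the fibre `t ↦ x[l↦t]`. Away from `r_l`
the relation between `p` and `q` makes `p` the constant multiple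
`p(x[l↦r_l]) e^{h_l(x)} / q(x[l↦r_l])` of `q` on the fibre. Lebesgue measure does not see the
point `r_l`, so
`∫ p(x[l↦t]) dm_l(t) = p(x[l↦r_l]) (1 + e^{h_l(x)} c_l(x) / q(x[l↦r_l])) = p(x[l↦r_l]) / ρ_l(x)`,
and dividing by it gives `ρ_l(x)` at `r_l` and `(1 - ρ_l(x)) q(x) / c_l(x)` elsewhere.
-/

open MeasureTheory

open scoped Classical in
noncomputable def groundedIndicator {D : Type*} (r x : D) : ℝ :=
  if x = r then 0 else 1

lemma groundedIndicator_self {D : Type*} (r : D) : groundedIndicator r r = 0 := by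
  simp [groundedIndicator]

lemma groundedIndicator_of_ne {D : Type*} {r x : D} (hx : x ≠ r) : groundedIndicator r x = 1 := by
  simp [groundedIndicator, hx]

section DiracAdd

variable {T : Type*} [MeasurableSpace T] {μ : Measure T} {a : T}
  {f g : T → ℝ} {H : ℝ}

lemma ae_eq_const_mul_of_eq_groundedIndicator [NullSingletonClass μ]
    (hf : ∀ t, f t = f a * Real.exp (groundedIndicator a t * H) * g t / g a) :
    f =ᵐ[μ] fun t => f a * Real.exp H / g a * g t := by
  filter_upwards [μ.ae_ne a] with t ht
  rw [hf t, groundedIndicator_of_ne ht, one_mul]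
  ring

variable [MeasurableSingletonClass T]

lemma integral_dirac_add (hf : Integrable f μ) :
    ∫ t, f t ∂(Measure.dirac a + μ) = f a + ∫ t, f t ∂μ := by
  rw [integral_add_measure (integrable_dirac enorm_lt_top) hf, integral_dirac]

lemma integral_dirac_add_of_eq_groundedIndicator [NullSingletonClass μ] (hg : Integrable g μ)
    (hf : ∀ t, f t = f a * Real.exp (groundedIndicator a t * H) * g t / g a) :
    ∫ t, f t ∂(Measure.dirac a + μ) = f a * (1 + Real.exp H * (∫ t, g t ∂μ) / g a) := by
  have hae := ae_eq_const_mul_of_eq_groundedIndicator (μ := μ) hf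
  rw [integral_dirac_add ((hg.const_mul _).congr hae.symm), integral_congr_ae hae,
    integral_const_mul]
  ring

theorem div_integral_dirac_add_eq_mixture [NullSingletonClass μ] (hg : Integrable g μ)
    (hga : 0 < g a) (hfa : f a ≠ 0) (hc : 0 < ∫ t, g t ∂μ)
    (hf : ∀ t, f t = f a * Real.exp (groundedIndicator a t * H) * g t / g a)
    {ρ : ℝ} (hρ : ρ = 1 / (1 + Real.exp H * (∫ t, g t ∂μ) / g a)) (s : T) :
    f s / ∫ t, f t ∂(Measure.dirac a + μ) =
      ρ * (1 - groundedIndicator a s) +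
        (1 - ρ) * groundedIndicator a s * (g s / ∫ t, g t ∂μ) := by
  rw [integral_dirac_add_of_eq_groundedIndicator hg hf, hρ]
  by_cases hs : s = a
  · subst hs
    simp only [groundedIndicator_self, sub_zero, mul_one, mul_zero, zero_mul, add_zero]
    field_simp
  · rw [hf s, groundedIndicator_of_ne hs]
    field_simp
    ring

end DiracAdd

theorem mixedStates_oneSite_conditional_mixedForm_general
    {N : ℕ} (n : Fin N → ℕ) (hn : ∀ i, 0 < n i)
    (r : ∀ i, Fin (n i) → ℝ) (l : Fin N)
    (q : (∀ i, Fin (n i) → ℝ) → ℝ)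
    (hqpos : ∀ x, 0 < q x)
    (h : (∀ i, Fin (n i) → ℝ) → ℝ)
    (hhl : ∀ (x : ∀ i, Fin (n i) → ℝ) (t : Fin (n l) → ℝ),
        h (Function.update x l t) = h x)
    (p : (∀ i, Fin (n i) → ℝ) → ℝ)
    (hppos : ∀ x, 0 < p x)
    (hpq : ∀ x : ∀ i, Fin (n i) → ℝ,
        p x = p (Function.update x l (r l)) *
          Real.exp (groundedIndicator (r l) (x l) * h x) *
          q x / q (Function.update x l (r l)))
    (hqint : ∀ x : ∀ i, Fin (n i) → ℝ,
        Integrable (fun t : Fin (n l) → ℝ => q (Function.update x l t)))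
    (hcpos : ∀ x : ∀ i, Fin (n i) → ℝ,
        0 < ∫ t : Fin (n l) → ℝ, q (Function.update x l t))
    (ρ : (∀ i, Fin (n i) → ℝ) → ℝ)
    (hρ : ∀ x : ∀ i, Fin (n i) → ℝ,
        ρ x = 1 / (1 + Real.exp (h x) *
          (∫ t : Fin (n l) → ℝ, q (Function.update x l t)) /
          q (Function.update x l (r l)))) :
    ∀ x : ∀ i, Fin (n i) → ℝ,
      p x / (∫ t : Fin (n l) → ℝ, p (Function.update x l t)
          ∂(Measure.dirac (r l) + volume)) =
        ρ x * (1 - groundedIndicator (r l) (x l)) +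
        (1 - ρ x) * groundedIndicator (r l) (x l) *
          (q x / ∫ t : Fin (n l) → ℝ, q (Function.update x l t)) := by
  intro x
  -- for `n l = 0` the fibre is a single point and Lebesgue measure on it is a Dirac mass
  have : Nonempty (Fin (n l)) := ⟨⟨0, hn l⟩⟩
  have hfibre : ∀ t : Fin (n l) → ℝ, p (Function.update x l t) =
      p (Function.update x l (r l)) * Real.exp (groundedIndicator (r l) t * h x) *
        q (Function.update x l t) / q (Function.update x l (r l)) := by
    intro t
    simpa only [Function.update_idem, Function.update_self, hhl] using
      hpq (Function.update x l t)
  simpa only [Function.update_eq_self] using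
    div_integral_dirac_add_eq_mixture (hqint x) (hqpos _) (hppos _).ne' (hcpos x) hfibre (hρ x)
      (x l)

/-- **Mixed form of the one-site conditional density.**
With `D = Π_{i∈S} ℝ^{n_i}`, `m_l = δ_{r_l} + λ_l`, `q : D → (0,∞)` measurable,
`h_l` measurable and independent of the `l`-th block, and `p : D → (0,∞)`
satisfying `p x = p (x[l↦r_l]) · exp(1*_{r_l}(x_l)·h_l x) · q x / q (x[l↦r_l])`,
with `c_l x = ∫ q(x[l↦t]) dλ_l(t)` finite and positive, and
`ρ_l x = 1 / (1 + e^{h_l x} · c_l x / q(x[l↦r_l]))`, one has for all `x`: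
`p x / ∫ p(x[l↦t]) dm_l(t)
 = ρ_l x · 1_{r_l}(x_l) + (1 − ρ_l x) · 1*_{r_l}(x_l) · q x / c_l x`,
i.e. the conditional law of the `l`-th coordinate given the others is a
mixture of a point mass at `r_l` (with weight `ρ_l x`) and the absolutely
continuous conditional density `q x / c_l x` (with weight `1 − ρ_l x`). -/
theorem mixedStates_oneSite_conditional_mixedForm
    {N : ℕ} (hN : 0 < N) (n : Fin N → ℕ) (hn : ∀ i, 0 < n i)
    (r : ∀ i, Fin (n i) → ℝ) (l : Fin N)
    (q : (∀ i, Fin (n i) → ℝ) → ℝ) (hqmeas : Measurable q)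
    (hqpos : ∀ x, 0 < q x)
    (h : (∀ i, Fin (n i) → ℝ) → ℝ) (hhmeas : Measurable h)
    (hhl : ∀ (x : ∀ i, Fin (n i) → ℝ) (t : Fin (n l) → ℝ),
        h (Function.update x l t) = h x)
    (p : (∀ i, Fin (n i) → ℝ) → ℝ) (hpmeas : Measurable p)
    (hppos : ∀ x, 0 < p x)
    (hpq : ∀ x : ∀ i, Fin (n i) → ℝ,
        p x = p (Function.update x l (r l)) *
          Real.exp (groundedIndicator (r l) (x l) * h x) *
          q x / q (Function.update x l (r l)))
    (hqint : ∀ x : ∀ i, Fin (n i) → ℝ,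
        Integrable (fun t : Fin (n l) → ℝ => q (Function.update x l t)))
    (hcpos : ∀ x : ∀ i, Fin (n i) → ℝ,
        0 < ∫ t : Fin (n l) → ℝ, q (Function.update x l t))
    (ρ : (∀ i, Fin (n i) → ℝ) → ℝ)
    (hρ : ∀ x : ∀ i, Fin (n i) → ℝ,
        ρ x = 1 / (1 + Real.exp (h x) *
          (∫ t : Fin (n l) → ℝ, q (Function.update x l t)) /
          q (Function.update x l (r l)))) :
    ∀ x : ∀ i, Fin (n i) → ℝ,
      p x / (∫ t : Fin (n l) → ℝ, p (Function.update x l t)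
          ∂(Measure.dirac (r l) + volume)) =
        ρ x * (1 - groundedIndicator (r l) (x l)) +
        (1 - ρ x) * groundedIndicator (r l) (x l) *
          (q x / ∫ t : Fin (n l) → ℝ, q (Function.update x l t)) :=
  mixedStates_oneSite_conditional_mixedForm_general n hn r l q hqpos h hhl p hppos hpq hqint hcpos ρ
    hρ
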